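/- arXiv:math/0503727 — 3 statements merged into one kernel-verified Lean document; each statement's English description precedes it below -/
import Mathlib

section
/- For every integer θ ≥ 0 (with the convention c_{−1} = 0), one has c_θ − c_{θ−1} = t^θ · (t⁻¹;q)_θ (t⁻¹ s;q)_θ / ((q;q)_θ (q s;q)_θ) · (1 − q^{2θ} t⁻¹ s) / (1 − t⁻¹ s). -/
/-!
Write `(a;q)_n = ∏_{i<n} (1 - a q^i)`. Peeling the last factor off the four products in
`c_{n+1}` and the first factor `1 - a` off `(t⁻¹;q)_{n+1}` and `(t⁻¹ s;q)_{n+1}` reduces the claim,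
after clearing the common factor `t^n (q t⁻¹;q)_n (q t⁻¹ s;q)_n / ((q;q)_{n+1} (q s;q)_{n+1})`,
to the polynomial identity
`t (1 - t⁻¹ x) (1 - t⁻¹ s x) - (1 - x) (1 - s x) = t (1 - t⁻¹) (1 - t⁻¹ s x²)` at `x = q^{n+1}`.
-/

open Finset

section

variable {F : Type*} [Field F]

def qPochhammer (a q : F) (n : ℕ) : F :=
  ∏ i ∈ range n, (1 - a * q ^ i)

section

variable (a q : F) (n : ℕ)

@[simp]
theorem qPochhammer_zero : qPochhammer a q 0 = 1 := prod_range_zero _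

theorem qPochhammer_succ : qPochhammer a q (n + 1) = qPochhammer a q n * (1 - a * q ^ n) :=
  prod_range_succ _ _

theorem qPochhammer_succ' : qPochhammer a q (n + 1) = (1 - a) * qPochhammer (a * q) q n := by
  rw [qPochhammer, prod_range_succ', pow_zero, mul_one, mul_comm]
  exact congrArg _ (prod_congr rfl fun i _ => by ring)

end

theorem qPochhammer_mul_left_ne_zero {a q : F} (h : ∀ m : ℕ, 1 ≤ m → 1 - q ^ m * a ≠ 0) (n : ℕ) :
    qPochhammer (q * a) q n ≠ 0 :=
  prod_ne_zero_iff.mpr fun i _ => by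
    simpa only [pow_succ', mul_right_comm q] using h (i + 1) (Nat.le_add_left 1 i)

def twoRowCoeff (q t s : F) (n : ℕ) : F :=
  t ^ n * (qPochhammer (q * t⁻¹) q n * qPochhammer (q * t⁻¹ * s) q n) /
    (qPochhammer q q n * qPochhammer (q * s) q n)

theorem twoRowCoeff_zero (q t s : F) : twoRowCoeff q t s 0 = 1 := by
  simp [twoRowCoeff]

theorem twoRowCoeff_step_identity {t : F} (ht : t ≠ 0) (s x : F) :
    t * (1 - t⁻¹ * x) * (1 - t⁻¹ * s * x) - (1 - x) * (1 - s * x) =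
      t * (1 - t⁻¹) * (1 - t⁻¹ * s * x ^ 2) := by
  field_simp
  ring

theorem twoRowCoeff_succ_sub {q t s : F} (ht : t ≠ 0)
    (h1 : ∀ m : ℕ, 1 ≤ m → 1 - q ^ m ≠ 0) (h2 : ∀ m : ℕ, 1 ≤ m → 1 - q ^ m * s ≠ 0)
    (h5 : 1 - t⁻¹ * s ≠ 0) (n : ℕ) :
    twoRowCoeff q t s (n + 1) - twoRowCoeff q t s n =
      t ^ (n + 1) * (qPochhammer t⁻¹ q (n + 1) * qPochhammer (t⁻¹ * s) q (n + 1)) /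
        (qPochhammer q q (n + 1) * qPochhammer (q * s) q (n + 1)) *
        ((1 - q ^ (2 * (n + 1)) * t⁻¹ * s) / (1 - t⁻¹ * s)) := by
  have hq : qPochhammer q q n ≠ 0 := by
    simpa only [mul_one] using
      qPochhammer_mul_left_ne_zero (a := (1 : F)) (by simpa only [mul_one] using h1) n
  have hqs := qPochhammer_mul_left_ne_zero h2 n
  have hd1 : 1 - q * q ^ n ≠ 0 := by simpa only [pow_succ'] using h1 (n + 1) le_add_self
  have hd2 : 1 - q * q ^ n * s ≠ 0 := by simpa only [pow_succ'] using h2 (n + 1) le_add_self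
  have hts : t - s ≠ 0 := by simpa [mul_sub, ht] using mul_ne_zero ht h5
  rw [qPochhammer_succ' t⁻¹, qPochhammer_succ' (t⁻¹ * s), mul_right_comm t⁻¹ s q]
  simp only [twoRowCoeff, qPochhammer_succ _ _ n, mul_comm t⁻¹ q]
  generalize qPochhammer (q * t⁻¹) q n = A, qPochhammer (q * t⁻¹ * s) q n = B at *
  generalize qPochhammer q q n = D₁, qPochhammer (q * s) q n = D₂ at *
  set C := t ^ n * A * B / (D₁ * (1 - q * q ^ n) * (D₂ * (1 - q * s * q ^ n))) with hC
  calc _ = C * (t * (1 - t⁻¹ * q ^ (n + 1)) * (1 - t⁻¹ * s * q ^ (n + 1)) -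
          (1 - q ^ (n + 1)) * (1 - s * q ^ (n + 1))) := by
        rw [hC]
        field_simp
        ring
    _ = C * (t * (1 - t⁻¹) * (1 - t⁻¹ * s * (q ^ (n + 1)) ^ 2)) := by
        rw [twoRowCoeff_step_identity ht]
    _ = _ := by
        rw [hC]
        field_simp
        ring

end

theorem stmt_1_general {F : Type*} [Field F] (q t s : F) (ht : t ≠ 0)
    (h1 : ∀ m : ℕ, 1 ≤ m → 1 - q ^ m ≠ 0)
    (h2 : ∀ m : ℕ, 1 ≤ m → 1 - q ^ m * s ≠ 0)
    (h5 : 1 - t⁻¹ * s ≠ 0)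
    (c : ℤ → F)
    (hneg : ∀ θ : ℤ, θ < 0 → c θ = 0)
    (hc : ∀ θ : ℕ, c θ = t ^ θ *
      ((∏ i ∈ Finset.range θ, (1 - q * t⁻¹ * q ^ i)) *
       (∏ i ∈ Finset.range θ, (1 - q * t⁻¹ * s * q ^ i))) /
      ((∏ i ∈ Finset.range θ, (1 - q * q ^ i)) *
       (∏ i ∈ Finset.range θ, (1 - q * s * q ^ i))))
    (θ : ℕ) :
    c θ - c ((θ : ℤ) - 1) = t ^ θ *
      ((∏ i ∈ Finset.range θ, (1 - t⁻¹ * q ^ i)) *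
       (∏ i ∈ Finset.range θ, (1 - t⁻¹ * s * q ^ i))) /
      ((∏ i ∈ Finset.range θ, (1 - q * q ^ i)) *
       (∏ i ∈ Finset.range θ, (1 - q * s * q ^ i))) *
      ((1 - q ^ (2 * θ) * t⁻¹ * s) / (1 - t⁻¹ * s)) := by
  have hc' : ∀ n : ℕ, c n = twoRowCoeff q t s n := hc
  cases θ with
  | zero =>
    rw [hc', twoRowCoeff_zero, Nat.cast_zero, zero_sub, hneg (-1) (by norm_num)]
    simp [div_self h5]
  | succ n =>
    rw [Nat.cast_succ, add_sub_cancel_right, ← Nat.cast_succ, hc', hc']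
    exact twoRowCoeff_succ_sub ht h1 h2 h5 n

/-- the difference `c θ - c (θ-1)` (with `c (-1) = 0`) in closed form;
this recovers Jing and Józefiak's formula for two-row Macdonald polynomials. -/
theorem stmt_1 {F : Type*} [Field F] (q t s : F) (hq : q ≠ 0) (ht : t ≠ 0) (hs : s ≠ 0)
    (h1 : ∀ m : ℕ, 1 ≤ m → 1 - q ^ m ≠ 0)
    (h2 : ∀ m : ℕ, 1 ≤ m → 1 - q ^ m * s ≠ 0)
    (h3 : ∀ m : ℕ, 1 ≤ m → 1 - q ^ m * t⁻¹ ≠ 0)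
    (h4 : ∀ m : ℕ, 1 ≤ m → 1 - q ^ m * t⁻¹ * s ≠ 0)
    (h5 : 1 - t⁻¹ * s ≠ 0)
    (c : ℤ → F)
    (hneg : ∀ θ : ℤ, θ < 0 → c θ = 0)
    (hc : ∀ θ : ℕ, c θ = t ^ θ *
      ((∏ i ∈ Finset.range θ, (1 - q * t⁻¹ * q ^ i)) *
       (∏ i ∈ Finset.range θ, (1 - q * t⁻¹ * s * q ^ i))) /
      ((∏ i ∈ Finset.range θ, (1 - q * q ^ i)) *
       (∏ i ∈ Finset.range θ, (1 - q * s * q ^ i))))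
    (θ : ℕ) :
    c θ - c ((θ : ℤ) - 1) = t ^ θ *
      ((∏ i ∈ Finset.range θ, (1 - t⁻¹ * q ^ i)) *
       (∏ i ∈ Finset.range θ, (1 - t⁻¹ * s * q ^ i))) /
      ((∏ i ∈ Finset.range θ, (1 - q * q ^ i)) *
       (∏ i ∈ Finset.range θ, (1 - q * s * q ^ i))) *
      ((1 - q ^ (2 * θ) * t⁻¹ * s) / (1 - t⁻¹ * s)) :=
  stmt_1_general q t s ht h1 h2 h5 c hneg hc θ
end

section
/- The formal power series f(x) = (1 − x) · ∑_{θ≥0} c_θ x^θ ∈ F[[x]] satisfies the identity of formal power series s₁ · (1 − q t⁻¹ x)(1 − q⁻¹ x) · f(q x) + s₂ · (1 − q⁻¹ t x)(1 − q x) · f(q⁻¹ x) = (s₁ + s₂) · (1 − q x)(1 − q⁻¹ x) · f(x), where f(q x) and f(q⁻¹ x) denote the series obtained from f by rescaling the variable x by q and q⁻¹ respectively. (This is the n = 2 case of the eigenfunction equation D¹ f = (s₁ + s₂) f for the modified Macdonald difference operator.) -/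
/-!
Write `f = (1 - x) g` with `g = ∑ c_θ x^θ`. Rescaling turns the factor `1 - x` of `f(q^{±1} x)` into
`1 - q^{±1} x`, so all three terms share the factor `(1 - q x)(1 - q⁻¹ x)` and the equation follows from
the first-order `q`-difference equation
`s₁ (1 - q t⁻¹ x) g(q x) + s₂ (1 - q⁻¹ t x) g(q⁻¹ x) = (s₁ + s₂)(1 - x) g(x)`.
Comparing coefficients of `x^{θ+1}` there gives exactly the ratio `c_{θ+1} / c_θ` read off from the
product formula for `c_θ`.
-/

open PowerSeries Finset

section CoeffLemmas

variable {R : Type*} [CommRing R]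

lemma rescale_one_sub_X_mul (a : R) (g : R⟦X⟧) :
    rescale a ((1 - X) * g) = (1 - C a * X) * rescale a g := by
  rw [map_mul, map_sub, map_one, rescale_X]

lemma coeff_zero_one_sub_C_mul_X_mul (a : R) (g : R⟦X⟧) :
    coeff 0 ((1 - C a * X) * g) = coeff 0 g := by
  simp [sub_mul, mul_assoc]

lemma coeff_succ_one_sub_C_mul_X_mul (a : R) (g : R⟦X⟧) (n : ℕ) :
    coeff (n + 1) ((1 - C a * X) * g) = coeff (n + 1) g - a * coeff n g := by
  rw [sub_mul, one_mul, map_sub, mul_assoc, coeff_C_mul, coeff_succ_X_mul]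

end CoeffLemmas

section Field

variable {F : Type*} [Field F]

lemma succ_eq_mul_of_eq_prod_div {c a b d e : ℕ → F} {t : F}
    (hc : ∀ θ, c θ = t ^ θ * ((∏ i ∈ range θ, a i) * ∏ i ∈ range θ, b i) /
      ((∏ i ∈ range θ, d i) * ∏ i ∈ range θ, e i)) (θ : ℕ) :
    c (θ + 1) = c θ * (t * (a θ * b θ) / (d θ * e θ)) := by
  rw [hc, hc, prod_range_succ, prod_range_succ, prod_range_succ, prod_range_succ, pow_succ]
  ring

lemma mk_qDifference_eq_of_recurrence {q t s₁ s₂ : F} (hq : q ≠ 0) (ht : t ≠ 0) {c : ℕ → F}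
    (hrec : ∀ n, c (n + 1) * ((1 - q ^ (n + 1)) * (s₂ - q ^ (n + 1) * s₁)) * t =
      c n * ((t - q ^ (n + 1)) * (t * s₂ - q ^ (n + 1) * s₁))) :
    C s₁ * ((1 : F⟦X⟧) - C (q * t⁻¹) * X) * rescale q (PowerSeries.mk c)
      + C s₂ * (1 - C (q⁻¹ * t) * X) * rescale q⁻¹ (PowerSeries.mk c)
      = C (s₁ + s₂) * (1 - X) * PowerSeries.mk c := by
  have hX : (1 - X : F⟦X⟧) = 1 - C 1 * X := by rw [map_one, one_mul]
  ext n
  rw [hX, map_add, mul_assoc, mul_assoc, mul_assoc, coeff_C_mul, coeff_C_mul, coeff_C_mul]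
  rcases n with _ | n
  · simp only [coeff_zero_one_sub_C_mul_X_mul, coeff_rescale, coeff_mk, pow_zero, one_mul]
    ring
  · simp only [coeff_succ_one_sub_C_mul_X_mul, coeff_rescale, coeff_mk]
    rw [inv_pow, inv_pow]
    field_simp
    linear_combination q ^ (n + 1) * hrec n

lemma recurrence_of_eq_prod_div {q t s₁ s₂ : F} (ht : t ≠ 0) (hs₂ : s₂ ≠ 0)
    (h1 : ∀ m : ℕ, 1 ≤ m → 1 - q ^ m ≠ 0) (h2 : ∀ m : ℕ, 1 ≤ m → 1 - q ^ m * (s₁ / s₂) ≠ 0)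
    {c : ℕ → F}
    (hc : ∀ θ : ℕ, c θ = t ^ θ *
      ((∏ i ∈ range θ, (1 - q * t⁻¹ * q ^ i)) * (∏ i ∈ range θ, (1 - q * t⁻¹ * (s₁ / s₂) * q ^ i))) /
      ((∏ i ∈ range θ, (1 - q * q ^ i)) * (∏ i ∈ range θ, (1 - q * (s₁ / s₂) * q ^ i))))
    (θ : ℕ) :
    c (θ + 1) * ((1 - q ^ (θ + 1)) * (s₂ - q ^ (θ + 1) * s₁)) * t =
      c θ * ((t - q ^ (θ + 1)) * (t * s₂ - q ^ (θ + 1) * s₁)) := by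
  have hd : 1 - q * q ^ θ ≠ 0 := by
    rw [← pow_succ']; exact h1 (θ + 1) (Nat.le_add_left 1 θ)
  have he : s₂ - q * q ^ θ * s₁ ≠ 0 := fun h ↦ h2 (θ + 1) (Nat.le_add_left 1 θ) <| by
    field_simp
    linear_combination h
  rw [succ_eq_mul_of_eq_prod_div hc θ]
  field_simp
  ring

end Field

theorem stmt_2_general {F : Type*} [Field F] (q t s₁ s₂ : F)
    (hq : q ≠ 0) (ht : t ≠ 0) (hs₂ : s₂ ≠ 0)
    (h1 : ∀ m : ℕ, 1 ≤ m → 1 - q ^ m ≠ 0)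
    (h2 : ∀ m : ℕ, 1 ≤ m → 1 - q ^ m * (s₁ / s₂) ≠ 0)
    (c : ℕ → F)
    (hc : ∀ θ : ℕ, c θ = t ^ θ *
      ((∏ i ∈ Finset.range θ, (1 - q * t⁻¹ * q ^ i)) *
       (∏ i ∈ Finset.range θ, (1 - q * t⁻¹ * (s₁ / s₂) * q ^ i))) /
      ((∏ i ∈ Finset.range θ, (1 - q * q ^ i)) *
       (∏ i ∈ Finset.range θ, (1 - q * (s₁ / s₂) * q ^ i))))
    (f : PowerSeries F)
    (hf : f = (1 - PowerSeries.X) * PowerSeries.mk c) :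
    PowerSeries.C (R := F) s₁ *
        ((1 - PowerSeries.C (R := F) (q * t⁻¹) * PowerSeries.X) *
         (1 - PowerSeries.C (R := F) q⁻¹ * PowerSeries.X)) * PowerSeries.rescale q f
      + PowerSeries.C (R := F) s₂ *
        ((1 - PowerSeries.C (R := F) (q⁻¹ * t) * PowerSeries.X) *
         (1 - PowerSeries.C (R := F) q * PowerSeries.X)) * PowerSeries.rescale q⁻¹ f
      = PowerSeries.C (R := F) (s₁ + s₂) *
        ((1 - PowerSeries.C (R := F) q * PowerSeries.X) *
         (1 - PowerSeries.C (R := F) q⁻¹ * PowerSeries.X)) * f := by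
  have hfirst := mk_qDifference_eq_of_recurrence hq ht
    (recurrence_of_eq_prod_div ht hs₂ h1 h2 hc)
  subst hf
  rw [rescale_one_sub_X_mul, rescale_one_sub_X_mul]
  linear_combination (1 - C q * X) * (1 - C q⁻¹ * X) * hfirst

/-- the formal power series `f(x) = (1-x) ∑_θ c_θ x^θ` satisfies the `n = 2`
eigenfunction equation of the modified Macdonald difference operator `D¹`. -/
theorem stmt_2 {F : Type*} [Field F] (q t s₁ s₂ : F)
    (hq : q ≠ 0) (ht : t ≠ 0) (hs₁ : s₁ ≠ 0) (hs₂ : s₂ ≠ 0)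
    (h1 : ∀ m : ℕ, 1 ≤ m → 1 - q ^ m ≠ 0)
    (h2 : ∀ m : ℕ, 1 ≤ m → 1 - q ^ m * (s₁ / s₂) ≠ 0)
    (h3 : ∀ m : ℕ, 1 ≤ m → 1 - q ^ m * t⁻¹ ≠ 0)
    (h4 : ∀ m : ℕ, 1 ≤ m → 1 - q ^ m * t⁻¹ * (s₁ / s₂) ≠ 0)
    (c : ℕ → F)
    (hc : ∀ θ : ℕ, c θ = t ^ θ *
      ((∏ i ∈ Finset.range θ, (1 - q * t⁻¹ * q ^ i)) *
       (∏ i ∈ Finset.range θ, (1 - q * t⁻¹ * (s₁ / s₂) * q ^ i))) /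
      ((∏ i ∈ Finset.range θ, (1 - q * q ^ i)) *
       (∏ i ∈ Finset.range θ, (1 - q * (s₁ / s₂) * q ^ i))))
    (f : PowerSeries F)
    (hf : f = (1 - PowerSeries.X) * PowerSeries.mk c) :
    PowerSeries.C (R := F) s₁ *
        ((1 - PowerSeries.C (R := F) (q * t⁻¹) * PowerSeries.X) *
         (1 - PowerSeries.C (R := F) q⁻¹ * PowerSeries.X)) * PowerSeries.rescale q f
      + PowerSeries.C (R := F) s₂ *
        ((1 - PowerSeries.C (R := F) (q⁻¹ * t) * PowerSeries.X) *
         (1 - PowerSeries.C (R := F) q * PowerSeries.X)) * PowerSeries.rescale q⁻¹ f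
      = PowerSeries.C (R := F) (s₁ + s₂) *
        ((1 - PowerSeries.C (R := F) q * PowerSeries.X) *
         (1 - PowerSeries.C (R := F) q⁻¹ * PowerSeries.X)) * f :=
  stmt_2_general q t s₁ s₂ hq ht hs₂ h1 h2 c hc f hf
end

section
/- When q = 0, the hypergeometric-type series f(x₁,x₂,x₃; s₁,s₂,s₃, 0, t) equals ∏_{1≤i<j≤3} (1 − x_j/x_i)/(1 − t x_j/x_i); that is, in F[[y,w]] one has ∑_{k≥0} [ (q t⁻¹;q)_k² (t;q)_k² / ((q;q)_k (q s₁/s₂;q)_k (q s₂/s₃;q)_k (q s₁/s₃;q)_k) ] (q s₁/s₃)^k (y w)^k · (1−y)(1−yw)(1−w) · ∏_{1≤i<j≤3} ₂φ₁(q^{k+1} t⁻¹, q t⁻¹ s_i/s_j; q^{k+1} s_i/s_j; q, t·r_{ij}) evaluated at q = 0 equals (1−y)(1−yw)(1−w) · ∏_{1≤i<j≤3} (∑_{n≥0} t^n r_{ij}^n), where r₁₂ = y, r₂₃ = w, r₁₃ = y w. (This recovers Hall–Littlewood-type factors, since at q = 0 each ₂φ₁ factor equals 1/(1 − t r_{ij})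 and only the k = 0 term survives.) -/
/-- The q-shifted factorial `(a;q)_m = ∏_{i=0}^{m-1} (1 - a q^i)`. -/
noncomputable def qPoch {F : Type*} [Field F] (q a : F) (m : ℕ) : F :=
  ∏ i ∈ Finset.range m, (1 - a * q ^ i)

/-- The sum `∑_{k ≥ 0} term k` of a family of formal power series in `F[[y,w]]`, each
`term k` being divisible by a monomial of total degree at least `k` (so that the
coefficient of a fixed monomial only receives finitely many contributions).  It is
defined coefficient-wise:  the coefficient on `y^p w^r` is the (finite) sum of the
corresponding coefficients of `term k` for `k ≤ p + r`. -/
noncomputable def seriesSum {F : Type*} [Field F]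
    (term : ℕ → MvPowerSeries (Fin 2) F) : MvPowerSeries (Fin 2) F :=
  fun e => ∑ k ∈ Finset.range (e 0 + e 1 + 1), MvPowerSeries.coeff (R := F) e (term k)

/-- The basic hypergeometric series `₂φ₁(a, b; c; q, x) = ∑_{n≥0} ((a;q)_n (b;q)_n /
((q;q)_n (c;q)_n)) xⁿ` regarded as a formal power series, specialized at an element
`x` of `F[[y,w]]` (of positive order). -/
noncomputable def phi21 {F : Type*} [Field F] (q a b c : F)
    (x : MvPowerSeries (Fin 2) F) : MvPowerSeries (Fin 2) F :=
  seriesSum fun n => MvPowerSeries.C (σ := Fin 2) (R := F)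
      (qPoch q a n * qPoch q b n / (qPoch q q n * qPoch q c n)) * x ^ n

theorem qPoch_zero {F : Type*} [Field F] (q a : F) : qPoch q a 0 = 1 :=
  Finset.prod_range_zero _

theorem seriesSum_eq_term_zero {F : Type*} [Field F] {term : ℕ → MvPowerSeries (Fin 2) F}
    (h : ∀ k, k ≠ 0 → term k = 0) : seriesSum term = term 0 := by
  ext e
  refine (Finset.sum_eq_single_of_mem 0 (Finset.mem_range.2 (Nat.succ_pos _)) ?_).trans rfl
  intro k _ hk
  simp [h k hk]

theorem phi21_zero {F : Type*} [Field F] (x : MvPowerSeries (Fin 2) F) :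
    phi21 0 0 0 0 x = seriesSum (x ^ ·) := by
  simp [phi21, qPoch]

theorem stmt_13_general {F : Type*} [Field F] (q t s₁ s₂ s₃ : F)
    (hq : q = 0) :
    seriesSum (fun k =>
      MvPowerSeries.C (σ := Fin 2) (R := F)
        (qPoch q (q * t⁻¹) k * qPoch q (q * t⁻¹) k * qPoch q t k * qPoch q t k /
          (qPoch q q k * qPoch q (q * (s₁ / s₂)) k * qPoch q (q * (s₂ / s₃)) k *
            qPoch q (q * (s₁ / s₃)) k) * (q * (s₁ / s₃)) ^ k) *
      (MvPowerSeries.X 0 * MvPowerSeries.X 1) ^ k *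
      ((1 - MvPowerSeries.X 0) * (1 - MvPowerSeries.X 0 * MvPowerSeries.X 1) *
        (1 - MvPowerSeries.X 1)) *
      phi21 q (q ^ (k + 1) * t⁻¹) (q * t⁻¹ * (s₁ / s₂)) (q ^ (k + 1) * (s₁ / s₂))
        (MvPowerSeries.C (σ := Fin 2) (R := F) t * MvPowerSeries.X 0) *
      phi21 q (q ^ (k + 1) * t⁻¹) (q * t⁻¹ * (s₁ / s₃)) (q ^ (k + 1) * (s₁ / s₃))
        (MvPowerSeries.C (σ := Fin 2) (R := F) t * (MvPowerSeries.X 0 * MvPowerSeries.X 1)) *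
      phi21 q (q ^ (k + 1) * t⁻¹) (q * t⁻¹ * (s₂ / s₃)) (q ^ (k + 1) * (s₂ / s₃))
        (MvPowerSeries.C (σ := Fin 2) (R := F) t * MvPowerSeries.X 1))
    = (1 - MvPowerSeries.X 0) * (1 - MvPowerSeries.X 0 * MvPowerSeries.X 1) *
        (1 - MvPowerSeries.X 1) *
      (seriesSum (fun n => MvPowerSeries.C (σ := Fin 2) (R := F) (t ^ n) * MvPowerSeries.X 0 ^ n) *
       seriesSum (fun n => MvPowerSeries.C (σ := Fin 2) (R := F) (t ^ n) *
          (MvPowerSeries.X 0 * MvPowerSeries.X 1) ^ n) *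
       seriesSum (fun n => MvPowerSeries.C (σ := Fin 2) (R := F) (t ^ n) * MvPowerSeries.X 1 ^ n)) := by
  subst hq
  -- for `k ≥ 1` the factor `(0 * (s₁ / s₃)) ^ k` vanishes
  rw [seriesSum_eq_term_zero fun k hk => by simp [zero_pow hk]]
  simp only [qPoch_zero, zero_add, pow_one, zero_mul, pow_zero, mul_one, div_one, map_one,
    one_mul, phi21_zero, mul_pow, ← map_pow]
  ring

/-- at `q = 0` the hypergeometric-type series
`f(x₁,x₂,x₃; s₁,s₂,s₃, 0, t)` equals `∏_{1≤i<j≤3} (1 - x_j/x_i)/(1 - t x_j/x_i)`,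
i.e. `(1-y)(1-yw)(1-w) · ∏_{1≤i<j≤3} ∑_{n≥0} tⁿ r_{ij}ⁿ` with `r₁₂ = y`, `r₁₃ = yw`,
`r₂₃ = w`; this recovers the Hall–Littlewood raising-operator factors. -/
theorem stmt_13 {F : Type*} [Field F] (q t s₁ s₂ s₃ : F)
    (ht : t ≠ 0) (hs₁ : s₁ ≠ 0) (hs₂ : s₂ ≠ 0) (hs₃ : s₃ ≠ 0)
    (hq : q = 0) :
    seriesSum (fun k =>
      MvPowerSeries.C (σ := Fin 2) (R := F)
        (qPoch q (q * t⁻¹) k * qPoch q (q * t⁻¹) k * qPoch q t k * qPoch q t k /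
          (qPoch q q k * qPoch q (q * (s₁ / s₂)) k * qPoch q (q * (s₂ / s₃)) k *
            qPoch q (q * (s₁ / s₃)) k) * (q * (s₁ / s₃)) ^ k) *
      (MvPowerSeries.X 0 * MvPowerSeries.X 1) ^ k *
      ((1 - MvPowerSeries.X 0) * (1 - MvPowerSeries.X 0 * MvPowerSeries.X 1) *
        (1 - MvPowerSeries.X 1)) *
      phi21 q (q ^ (k + 1) * t⁻¹) (q * t⁻¹ * (s₁ / s₂)) (q ^ (k + 1) * (s₁ / s₂))
        (MvPowerSeries.C (σ := Fin 2) (R := F) t * MvPowerSeries.X 0) *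
      phi21 q (q ^ (k + 1) * t⁻¹) (q * t⁻¹ * (s₁ / s₃)) (q ^ (k + 1) * (s₁ / s₃))
        (MvPowerSeries.C (σ := Fin 2) (R := F) t * (MvPowerSeries.X 0 * MvPowerSeries.X 1)) *
      phi21 q (q ^ (k + 1) * t⁻¹) (q * t⁻¹ * (s₂ / s₃)) (q ^ (k + 1) * (s₂ / s₃))
        (MvPowerSeries.C (σ := Fin 2) (R := F) t * MvPowerSeries.X 1))
    = (1 - MvPowerSeries.X 0) * (1 - MvPowerSeries.X 0 * MvPowerSeries.X 1) *
        (1 - MvPowerSeries.X 1) *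
      (seriesSum (fun n => MvPowerSeries.C (σ := Fin 2) (R := F) (t ^ n) * MvPowerSeries.X 0 ^ n) *
       seriesSum (fun n => MvPowerSeries.C (σ := Fin 2) (R := F) (t ^ n) *
          (MvPowerSeries.X 0 * MvPowerSeries.X 1) ^ n) *
       seriesSum (fun n => MvPowerSeries.C (σ := Fin 2) (R := F) (t ^ n) * MvPowerSeries.X 1 ^ n)) :=
  stmt_13_general q t s₁ s₂ s₃ hq
end
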